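/- arXiv:2505.21278 — 2 statements merged into one kernel-verified Lean document; each statement's English description precedes it below -/
import Mathlib

section
/- With Σ as above and Σ⁻¹ its inverse (which exists since det(Σ) > 0 when p ∈ (0,1) and σ² > 0), the combination (Σ⁻¹)₁₁ + 2(Σ⁻¹)₁₂ + (Σ⁻¹)₂₂ equals (σ² + pΔ₂²) / (pσ²((1−p)Δ₁² + pΔ₂² + σ²)). -/
open Matrix

/-- Holds without invertibility: if `a * c - b * b = 0`, both sides are `0`. -/
theorem Matrix.inv_fin_two_symm_entry_sum {K : Type*} [Field K] (a b c : K) :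
    (!![a, b; b, c])⁻¹ 0 0 + 2 * (!![a, b; b, c])⁻¹ 0 1 + (!![a, b; b, c])⁻¹ 1 1
      = (a - 2 * b + c) / (a * c - b * b) := by
  simp only [inv_def, Ring.inverse_eq_inv', det_fin_two_of, adjugate_fin_two_of, smul_apply,
    smul_eq_mul, of_apply, cons_val', cons_val_zero, cons_val_one, empty_val',
    cons_val_fin_one]
  ring

theorem sigma_inv_combo1_general (p σ2 Δ₁ Δ₂ : ℝ) (hp : p ∈ Set.Ioo (0 : ℝ) 1)
    (S : Matrix (Fin 2) (Fin 2) ℝ)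
    (hS : S = !![σ2 + p * (1 - p) * (Δ₁ - Δ₂) ^ 2,
        p * σ2 + p * (1 - p) * (Δ₁ ^ 2 - Δ₁ * Δ₂);
        p * σ2 + p * (1 - p) * (Δ₁ ^ 2 - Δ₁ * Δ₂),
        p * σ2 + p * (1 - p) * Δ₁ ^ 2]) :
    S⁻¹ 0 0 + 2 * S⁻¹ 0 1 + S⁻¹ 1 1
      = (σ2 + p * Δ₂ ^ 2) / (p * σ2 * ((1 - p) * Δ₁ ^ 2 + p * Δ₂ ^ 2 + σ2)) := by
  set Q := (1 - p) * Δ₁ ^ 2 + p * Δ₂ ^ 2 + σ2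
  have h1p : 1 - p ≠ 0 := sub_ne_zero.mpr hp.2.ne'
  rw [hS, Matrix.inv_fin_two_symm_entry_sum]
  -- `a - 2b + c` and `det Σ` share the factor `1 - p`
  calc _ = (1 - p) * (σ2 + p * Δ₂ ^ 2) / ((1 - p) * (p * σ2 * Q)) := by congr 1 <;> ring
    _ = _ := mul_div_mul_left _ _ h1p

/-- `(Σ⁻¹)₁₁ + 2(Σ⁻¹)₁₂ + (Σ⁻¹)₂₂` for the mixture covariance matrix. -/
theorem sigma_inv_combo1 (p σ2 Δ₁ Δ₂ : ℝ) (hp : p ∈ Set.Ioo (0 : ℝ) 1) (hσ : 0 < σ2)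
    (S : Matrix (Fin 2) (Fin 2) ℝ)
    (hS : S = !![σ2 + p * (1 - p) * (Δ₁ - Δ₂) ^ 2,
        p * σ2 + p * (1 - p) * (Δ₁ ^ 2 - Δ₁ * Δ₂);
        p * σ2 + p * (1 - p) * (Δ₁ ^ 2 - Δ₁ * Δ₂),
        p * σ2 + p * (1 - p) * Δ₁ ^ 2]) :
    S⁻¹ 0 0 + 2 * S⁻¹ 0 1 + S⁻¹ 1 1
      = (σ2 + p * Δ₂ ^ 2) / (p * σ2 * ((1 - p) * Δ₁ ^ 2 + p * Δ₂ ^ 2 + σ2)) :=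
  sigma_inv_combo1_general p σ2 Δ₁ Δ₂ hp S hS
end

section
/- Let n = n₁ + n₂ with n₁ = pn, n₂ = (1−p)n, and let d̄, d̄¹, d̄² be real numbers satisfying n d̄ = n₁ d̄¹ + n₂ d̄², i.e., d̄ = p d̄¹ + (1−p) d̄². Then the quadratic form n·(d̄, p d̄¹)·Σ⁻¹·(d̄, p d̄¹)ᵀ equals n·[ p²(d̄¹)² · (σ² + pΔ₂²)/(pσ²((1−p)Δ₁² + pΔ₂² + σ²)) + 2p(1−p) d̄¹ d̄² · Δ₁Δ₂/(σ²((1−p)Δ₁² + pΔ₂² + σ²)) + (1−p)²(d̄²)² · (σ² + (1−p)Δ₁²)/((1−p)σ²((1−p)Δ₁² + pΔ₂² + σ²)) ]. -/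
open Matrix

set_option maxHeartbeats 1600000

/-- decomposition of the Wald-type quadratic form
`Tʰ = n z̄ᵀ Σ⁻¹ z̄` with `z̄ = (d̄, p d̄¹)` and `d̄ = p d̄¹ + (1−p) d̄²`. -/
theorem wald_quadratic_form (p σ2 Δ₁ Δ₂ n d1 d2 : ℝ)
    (hp : p ∈ Set.Ioo (0 : ℝ) 1) (hσ : 0 < σ2) (hn : 0 < n)
    (S : Matrix (Fin 2) (Fin 2) ℝ)
    (hS : S = !![σ2 + p * (1 - p) * (Δ₁ - Δ₂) ^ 2,
        p * σ2 + p * (1 - p) * (Δ₁ ^ 2 - Δ₁ * Δ₂);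
        p * σ2 + p * (1 - p) * (Δ₁ ^ 2 - Δ₁ * Δ₂),
        p * σ2 + p * (1 - p) * Δ₁ ^ 2])
    (z : Fin 2 → ℝ) (hz : z = ![p * d1 + (1 - p) * d2, p * d1]) :
    n * (z ⬝ᵥ (S⁻¹ *ᵥ z))
      = n * (p ^ 2 * d1 ^ 2 *
            ((σ2 + p * Δ₂ ^ 2) / (p * σ2 * ((1 - p) * Δ₁ ^ 2 + p * Δ₂ ^ 2 + σ2)))
          + 2 * p * (1 - p) * d1 * d2 *
            (Δ₁ * Δ₂ / (σ2 * ((1 - p) * Δ₁ ^ 2 + p * Δ₂ ^ 2 + σ2)))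
          + (1 - p) ^ 2 * d2 ^ 2 *
            ((σ2 + (1 - p) * Δ₁ ^ 2) /
              ((1 - p) * σ2 * ((1 - p) * Δ₁ ^ 2 + p * Δ₂ ^ 2 + σ2)))) := by
  obtain ⟨hp0, hp1⟩ := hp
  have h1p : (0:ℝ) < 1 - p := by linarith
  have hq : (0:ℝ) < (1 - p) * Δ₁ ^ 2 + p * Δ₂ ^ 2 + σ2 := by positivity
  subst hS hz
  rw [Matrix.inv_def, Matrix.adjugate_fin_two, Matrix.det_fin_two_of,
    Ring.inverse_eq_inv']
  have hdet : (σ2 + p * (1 - p) * (Δ₁ - Δ₂) ^ 2) * (p * σ2 + p * (1 - p) * Δ₁ ^ 2)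
      - (p * σ2 + p * (1 - p) * (Δ₁ ^ 2 - Δ₁ * Δ₂)) * (p * σ2 + p * (1 - p) * (Δ₁ ^ 2 - Δ₁ * Δ₂))
      = p * (1 - p) * σ2 * ((1 - p) * Δ₁ ^ 2 + p * Δ₂ ^ 2 + σ2) := by ring
  rw [hdet]
  simp only [Matrix.mulVec, dotProduct, Fin.sum_univ_two, Matrix.smul_apply,
    Matrix.of_apply, Matrix.cons_val', Matrix.cons_val_zero, Matrix.cons_val_one,
    Matrix.head_cons, Matrix.empty_val', Matrix.cons_val_fin_one, Matrix.head_fin_const,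
    smul_eq_mul]
  field_simp
  ring
end
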